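/- arXiv:math/0212027 — 4 statements merged into one kernel-verified Lean document; each statement's English description precedes it below -/
import Mathlib

section
/- Let ν be a limit ordinal. The poset P_ν of finite partial functions p : ν × ν ⇀ 2 satisfying (i) p(α,α) = 1 whenever (α,α) ∈ dom(p) and (ii) α ≤ β whenever p(α,β) = 1, ordered by reverse inclusion, satisfies the countable chain condition: every antichain in P_ν is countable. -/
/-- A condition in the poset `P_ν`. -/
def IsCondition (ν : Ordinal) (p : Ordinal × Ordinal → Option Bool) : Prop :=
  {x | p x ≠ none}.Finite ∧
  (∀ x, p x ≠ none → x.1 < ν ∧ x.2 < ν) ∧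
  (∀ α, p (α, α) ≠ none → p (α, α) = some true) ∧
  (∀ α β, p (α, β) = some true → α ≤ β)

/-- `q` extends `p` in the forcing order. -/
def CondExtends (q p : Ordinal × Ordinal → Option Bool) : Prop :=
  ∀ x, p x ≠ none → q x = p x

/-!
Two conditions that agree on their common domain are compatible: letting `p` take precedence,
`fun x => (p x).or (q x)` is again a condition extending both. Hence an antichain is a family of
finite partial functions into `Bool` that pairwise disagree at a common point, and such a family is
countable by induction on the size of the domains: every member disagrees with a fixed `p₀` at
some point `x` of its finite domain, and each slice `{p | p x = some b}`, with `x` erased, is a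
family of the same kind with smaller domains.
-/

section PartialFunctions

variable {X β : Type*}

def Conflict (p q : X → Option β) : Prop :=
  ∃ x, p x ≠ none ∧ q x ≠ none ∧ p x ≠ q x

lemma setOf_update_none_ne_none [DecidableEq X] (p : X → Option β) (x : X) :
    {y | Function.update p x none y ≠ none} = {y | p y ≠ none} \ {x} := by
  ext y
  by_cases hy : y = x <;> simp [hy]

lemma Conflict.update_none [DecidableEq X] {p q : X → Option β} {x : X} (h : Conflict p q)
    (hx : p x = q x) : Conflict (Function.update p x none) (Function.update q x none) := by
  obtain ⟨y, hpy, hqy, hpq⟩ := h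
  have hyx : y ≠ x := by rintro rfl; exact hpq hx
  exact ⟨y, by simpa [hyx] using hpy, by simpa [hyx] using hqy, by simpa [hyx] using hpq⟩

lemma Set.Pairwise.conflict_update_none [DecidableEq X] {A : Set (X → Option β)}
    (hA : A.Pairwise Conflict) (x : X) (b : β) :
    ((Function.update · x none) '' {p ∈ A | p x = some b}).Pairwise Conflict := by
  rintro _ ⟨p, hp, rfl⟩ _ ⟨q, hq, rfl⟩ hne
  exact (hA hp.1 hq.1 fun h => hne (h ▸ rfl)).update_none (hp.2.trans hq.2.symm)

lemma injOn_update_none [DecidableEq X] (x : X) (b : β) (A : Set (X → Option β)) :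
    Set.InjOn (Function.update · x none) {p ∈ A | p x = some b} := by
  intro p hp q hq hpq
  funext y
  rcases eq_or_ne y x with rfl | hy
  · rw [hp.2, hq.2]
  · simpa [hy] using congrFun hpq y

lemma Set.Pairwise.subset_insert_biUnion_slices {A : Set (X → Option β)}
    (hA : A.Pairwise Conflict) {p₀ : X → Option β} (hp₀ : p₀ ∈ A) :
    A ⊆ insert p₀ (⋃ x ∈ {x | p₀ x ≠ none}, ⋃ b : β, {p ∈ A | p x = some b}) := by
  intro p hp
  rcases eq_or_ne p p₀ with rfl | hne
  · exact Set.mem_insert _ _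
  obtain ⟨x, hpx, hp₀x, -⟩ := hA hp hp₀ hne
  obtain ⟨b, hb⟩ := Option.ne_none_iff_exists'.mp hpx
  exact Set.mem_insert_of_mem _ (Set.mem_biUnion hp₀x (Set.mem_iUnion.mpr ⟨b, hp, hb⟩))

theorem countable_of_pairwise_conflict_of_encard_le [Countable β] (n : ℕ) :
    ∀ A : Set (X → Option β), (∀ p ∈ A, {x | p x ≠ none}.encard ≤ n) →
      A.Pairwise Conflict → A.Countable := by
  classical
  induction n with
  | zero =>
    refine fun A hdom hA => Set.Subsingleton.countable fun p hp q hq => by_contra fun hne => ?_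
    obtain ⟨x, hpx, -⟩ := hA hp hq hne
    have : {x | p x ≠ none} = ∅ := Set.encard_eq_zero.mp (nonpos_iff_eq_zero.mp (hdom p hp))
    exact this.subset hpx
  | succ n ih =>
    intro A hdom hA
    rcases A.eq_empty_or_nonempty with rfl | ⟨p₀, hp₀⟩
    · exact Set.countable_empty
    have hslice (x : X) (b : β) : {p ∈ A | p x = some b}.Countable := by
      refine Set.countable_of_injective_of_countable_image (injOn_update_none x b A) ?_
      refine ih _ ?_ (hA.conflict_update_none x b)
      rintro _ ⟨p, hp, rfl⟩
      have hx : x ∈ {y | p y ≠ none} := by simp [hp.2]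
      rw [setOf_update_none_ne_none, ← ENat.add_le_add_iff_right ENat.one_ne_top,
        Set.encard_sdiff_singleton_add_one hx]
      exact_mod_cast hdom p hp.1
    exact (Set.countable_insert.mpr ((Set.finite_of_encard_le_coe (hdom p₀ hp₀)).countable.biUnion
      fun x _ => Set.countable_iUnion (hslice x))).mono (hA.subset_insert_biUnion_slices hp₀)

theorem countable_of_pairwise_conflict [Countable β] {A : Set (X → Option β)}
    (hfin : ∀ p ∈ A, {x | p x ≠ none}.Finite) (hA : A.Pairwise Conflict) : A.Countable := by
  have hcover : A = ⋃ n : ℕ, {p ∈ A | {x | p x ≠ none}.encard ≤ n} := by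
    ext p
    simp only [Set.mem_iUnion, Set.mem_ofPred_eq]
    exact ⟨fun hp => ⟨_, hp, (hfin p hp).encard_eq_coe.le⟩, fun ⟨_, hp, _⟩ => hp⟩
  rw [hcover]
  exact Set.countable_iUnion fun n => countable_of_pairwise_conflict_of_encard_le n _
    (fun p hp => hp.2) (hA.mono fun _ hp => hp.1)

lemma setOf_or_ne_none (p q : X → Option β) :
    {x | (p x).or (q x) ≠ none} = {x | p x ≠ none} ∪ {x | q x ≠ none} := by
  ext x
  simp only [Set.mem_ofPred_eq, Set.mem_union, ne_eq, Option.or_eq_none_iff]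
  tauto

end PartialFunctions

lemma IsCondition.or {ν : Ordinal} {p q : Ordinal × Ordinal → Option Bool}
    (hp : IsCondition ν p) (hq : IsCondition ν q) : IsCondition ν fun x => (p x).or (q x) := by
  obtain ⟨hpf, hpb, hpd, hpo⟩ := hp
  obtain ⟨hqf, hqb, hqd, hqo⟩ := hq
  refine ⟨?_, fun x hx => ?_, fun α => ?_, fun α β => ?_⟩
  · rw [setOf_or_ne_none]
    exact hpf.union hqf
  · rw [← Set.mem_ofPred_eq (p := fun x => _ ≠ none), setOf_or_ne_none] at hx
    exact hx.elim (hpb x) (hqb x)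
  · dsimp only
    by_cases h : p (α, α) = none
    · simpa [h] using hqd α
    · obtain ⟨b, hb⟩ := Option.ne_none_iff_exists'.mp h
      simpa [hb] using hpd α h
  · simp only [Option.or_eq_some_iff]
    rintro (h | ⟨-, h⟩)
    exacts [hpo α β h, hqo α β h]

lemma condExtends_or_left (p q : Ordinal × Ordinal → Option Bool) :
    CondExtends (fun x => (p x).or (q x)) p := by
  intro x hx
  obtain ⟨b, hb⟩ := Option.ne_none_iff_exists'.mp hx
  simp [hb]

lemma condExtends_or_right {p q : Ordinal × Ordinal → Option Bool}
    (h : ¬Conflict p q) : CondExtends (fun x => (p x).or (q x)) q := by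
  intro x hx
  by_cases hpx : p x = none
  · simp [hpx]
  · obtain ⟨b, hb⟩ := Option.ne_none_iff_exists'.mp hpx
    have hpq : p x = q x := not_not.mp fun hne => h ⟨x, hpx, hx, hne⟩
    simp [hb, ← hpq]

theorem Pnu_ccc_general (ν : Ordinal)
    (A : Set (Ordinal × Ordinal → Option Bool))
    (hA : ∀ p ∈ A, IsCondition ν p)
    (hanti : ∀ p ∈ A, ∀ q ∈ A, p ≠ q →
      ¬ ∃ r, IsCondition ν r ∧ CondExtends r p ∧ CondExtends r q) :
    A.Countable := by
  refine countable_of_pairwise_conflict (fun p hp => (hA p hp).1) fun p hp q hq hne => ?_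
  by_contra h
  exact hanti p hp q hq hne
    ⟨_, (hA p hp).or (hA q hq), condExtends_or_left p q, condExtends_or_right h⟩

/-- The poset `P_ν` is CCC: every antichain (set of pairwise incompatible
conditions) is countable. -/
theorem Pnu_ccc (ν : Ordinal) (hν : Order.IsSuccLimit ν)
    (A : Set (Ordinal × Ordinal → Option Bool))
    (hA : ∀ p ∈ A, IsCondition ν p)
    (hanti : ∀ p ∈ A, ∀ q ∈ A, p ≠ q →
      ¬ ∃ r, IsCondition ν r ∧ CondExtends r p ∧ CondExtends r q) :
    A.Countable :=
  Pnu_ccc_general ν A hA hanti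
end

section
/- Every infinite Hausdorff topological space has an infinite cellular family, i.e., an infinite family of pairwise disjoint nonempty open sets. -/
/-!
An infinite open set `s` of a Hausdorff space splits into a nonempty open set and a disjoint
infinite open set: separate two points of `s` by open sets `u`, `v`; if `v ∩ s` is finite, the
point it contains is isolated and can be split off by itself. Iterating the split on the infinite
remainder, starting from the whole space, peels off infinitely many disjoint nonempty open sets.
-/

open Set Function

theorem exists_seq_pairwise_disjoint_of_forall_split {α : Type*} {P Q : Set α → Prop}
    {s : Set α} (hs : P s)
    (split : ∀ t, P t → ∃ u v, Q u ∧ P v ∧ Disjoint u v ∧ u ⊆ t ∧ v ⊆ t) :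
    ∃ f : ℕ → Set α, (∀ n, Q (f n)) ∧ Pairwise (Disjoint on f) := by
  choose! u v hQu hPv hdisj hut hvt using split
  set w : ℕ → Set α := fun n => v^[n] s
  have hPw : ∀ n, P (w n) := fun n => by
    induction n with
    | zero => exact hs
    | succ n ih => simpa only [w, iterate_succ_apply'] using hPv _ ih
  have hw_succ : ∀ n, w (n + 1) = v (w n) := fun n => iterate_succ_apply' v n s
  have hw_anti : Antitone w := antitone_nat_of_succ_le fun n => hw_succ n ▸ hvt _ (hPw n)
  refine ⟨fun n => u (w n), fun n => hQu _ (hPw n), (pairwise_disjoint_on _).2 fun m n hmn => ?_⟩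
  -- `u (w n) ⊆ w n ⊆ w (m + 1) = v (w m)`, which is disjoint from `u (w m)`.
  refine (hdisj _ (hPw m)).mono_right ?_
  rw [← hw_succ]
  exact (hut _ (hPw n)).trans (hw_anti hmn)

theorem exists_isOpen_nonempty_disjoint_isOpen_infinite {X : Type*} [TopologicalSpace X]
    [T2Space X] {s : Set X} (hso : IsOpen s) (hsi : s.Infinite) :
    ∃ u v, (IsOpen u ∧ u.Nonempty) ∧ (IsOpen v ∧ v.Infinite) ∧ Disjoint u v ∧ u ⊆ s ∧ v ⊆ s := by
  obtain ⟨x, hx, y, hy, hxy⟩ := hsi.nontrivial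
  obtain ⟨u, v, hu, hv, hxu, hyv, huv⟩ := t2_separation hxy
  by_cases hvs : (v ∩ s).Infinite
  · exact ⟨u ∩ s, v ∩ s, ⟨hu.inter hso, x, hxu, hx⟩, ⟨hv.inter hso, hvs⟩,
      huv.mono inter_subset_left inter_subset_left, inter_subset_right, inter_subset_right⟩
  · have hy_open : IsOpen ({y} : Set X) :=
      isOpen_singleton_of_finite_mem_nhds y ((hv.inter hso).mem_nhds ⟨hyv, hy⟩)
        (not_infinite.1 hvs)
    exact ⟨{y}, s \ {y}, ⟨hy_open, singleton_nonempty y⟩,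
      ⟨hso.sdiff isClosed_singleton, hsi.sdiff (finite_singleton y)⟩,
      disjoint_sdiff_right, singleton_subset_iff.2 hy, sdiff_subset⟩

/-- Every infinite Hausdorff space has an infinite cellular family, i.e. an infinite
family of pairwise disjoint nonempty open sets. -/
theorem infinite_hausdorff_has_infinite_cellular_family
    (X : Type*) [TopologicalSpace X] [T2Space X] [Infinite X] :
    ∃ C : Set (Set X), C.Infinite ∧ (∀ u ∈ C, IsOpen u ∧ u.Nonempty) ∧
      C.PairwiseDisjoint id := by
  obtain ⟨f, hf, hdisj⟩ := exists_seq_pairwise_disjoint_of_forall_split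
    (P := fun s : Set X => IsOpen s ∧ s.Infinite) ⟨isOpen_univ, infinite_univ⟩
    fun _ ht => exists_isOpen_nonempty_disjoint_isOpen_infinite ht.1 ht.2
  have hf_inj : Injective f := fun m n hmn => by
    by_contra hne
    exact (hdisj hne).ne (hf m).2.ne_empty hmn
  exact ⟨range f, infinite_range_of_injective hf_inj, forall_mem_range.2 hf,
    hdisj.range_pairwise⟩
end

section
/- Let A be a countable set of uncountable regular cardinals, and for each ρ ∈ A let X_ρ be a topological space whose set of uncountable regular calibers is exactly the class of all uncountable regular cardinals except ρ. Let X = ⊕_{ρ ∈ A} X_ρ be the disjoint topological sum. Then for every uncountable regular cardinal λ: λ is a caliber of X if and only if λ ∉ A. -/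
universe u v

open Cardinal

/-- `ρ` is a caliber of the space `X`. -/
def IsCaliber (X : Type u) [TopologicalSpace X] (ρ : Cardinal.{v}) : Prop :=
  ∀ {ι : Type v} (U : ι → Set X), #ι = ρ → (∀ i, IsOpen (U i) ∧ (U i).Nonempty) →
    ∃ s : Set ι, #s = ρ ∧ (⋂ i ∈ s, U i).Nonempty

/-- Let `A = range r` be a countable set of uncountable regular cardinals, and for each
`ρ ∈ A` let `X ρ` be a space whose uncountable regular calibers are exactly the
uncountable regular cardinals other than `ρ`. Then an uncountable regular cardinal `λ`
is a caliber of the topological sum `⊕ X ρ` iff `λ ∉ A`. -/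
theorem calibers_of_sigma (ι : Type u) [Countable ι] (r : ι → Cardinal.{u})
    (hr : ∀ i, ℵ₀ < r i ∧ (r i).IsRegular)
    (X : ι → Type u) [∀ i, TopologicalSpace (X i)]
    (hcal : ∀ i, ∀ lam : Cardinal.{u}, ℵ₀ < lam → lam.IsRegular →
      (IsCaliber (X i) lam ↔ lam ≠ r i)) :
    ∀ lam : Cardinal.{u}, ℵ₀ < lam → lam.IsRegular →
      (IsCaliber ((i : ι) × X i) lam ↔ lam ∉ Set.range r) := by
  intro lam hlam hreg
  constructor
  · -- if lam = r i0, lam is not a caliber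
    rintro hcalib ⟨i0, rfl⟩
    refine (hcal i0 (r i0) hlam hreg).mp ?_ rfl
    intro κ U hκ hU
    obtain ⟨s, hs, p, hp⟩ := hcalib (fun j => Sigma.mk i0 '' U j) hκ
      (fun j => ⟨(isOpenMap_sigmaMk _ (hU j).1), (hU j).2.image _⟩)
    have hsne : s.Nonempty := by
      rw [← Set.nonempty_coe_sort, ← Cardinal.mk_ne_zero_iff, hs]
      exact hreg.pos.ne'
    obtain ⟨j0, hj0⟩ := hsne
    have hpj0 : p ∈ Sigma.mk i0 '' U j0 := by
      have := Set.mem_iInter₂.mp hp j0 hj0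
      exact this
    obtain ⟨x, hx, hpx⟩ := hpj0
    refine ⟨s, hs, x, Set.mem_iInter₂.mpr fun j hj => ?_⟩
    obtain ⟨y, hy, hpy⟩ := Set.mem_iInter₂.mp hp j hj
    have : y = x := sigma_mk_injective (hpy.trans hpx.symm)
    rwa [← this]
  · -- if lam ∉ range r, lam is a caliber
    intro hnot κ U hκ hU
    choose p hp using fun j => (hU j).2
    set f : κ → ι := fun j => (p j).1 with hf
    -- some fiber of f has cardinality lam
    have hfib : ∃ i0, #(f ⁻¹' {i0} : Set κ) = lam := by
      by_contra h
      push_neg at h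
      have hlt : ∀ i0, #(f ⁻¹' {i0} : Set κ) < lam := by
        intro i0
        exact lt_of_le_of_ne (hκ ▸ Cardinal.mk_subtype_le _) (h i0)
      have hsum : #κ = Cardinal.sum fun i0 => #(f ⁻¹' {i0} : Set κ) := by
        rw [← Cardinal.mk_sigma]
        exact (Cardinal.mk_congr (Equiv.sigmaFiberEquiv f)).symm
      have : #κ < lam :=
        hsum ▸ Cardinal.sum_lt_of_isRegular hreg
          ((Cardinal.mk_le_aleph0).trans_lt hlam) hlt
      exact absurd hκ this.ne
    obtain ⟨i0, hi0⟩ := hfib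
    set S : Set κ := f ⁻¹' {i0} with hS
    have hne : lam ≠ r i0 := fun h => hnot ⟨i0, h.symm⟩
    have hcal0 : IsCaliber (X i0) lam := (hcal i0 lam hlam hreg).mpr hne
    have hVne : ∀ j : S, (Sigma.mk i0 ⁻¹' U (j : κ)).Nonempty := by
      rintro ⟨j, hj⟩
      have hj' : (p j).1 = i0 := hj
      have hpj := hp j
      rcases hq : p j with ⟨i', x⟩
      rw [hq] at hj' hpj
      subst hj'
      exact ⟨x, hpj⟩
    obtain ⟨t, ht, x, hx⟩ := hcal0 (fun j : S => Sigma.mk i0 ⁻¹' U (j : κ)) hi0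
      (fun j => ⟨(continuous_sigmaMk).isOpen_preimage _ (hU _).1, hVne j⟩)
    refine ⟨Subtype.val '' t, ?_, ⟨i0, x⟩, Set.mem_iInter₂.mpr ?_⟩
    · rw [Cardinal.mk_image_eq Subtype.val_injective, ht]
    · rintro j ⟨j', hj', rfl⟩
      exact Set.mem_iInter₂.mp hx j' hj'
end

section
/- Let α be a limit ordinal with uncountable cofinality, and suppose X_α is a topological space on underlying set α that is left-separated in the natural ordering and contains a dense subset of cardinality cf(α) (for instance, any cofinal subset S ⊆ α that is dense in X_α). Then the set of uncountable regular calibers of X_α is exactly the class of all uncountable regular cardinals other than cf(α), provided every uncountable regular ρ < cf(α) is a caliber of X_α. -/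
/-!
If `ρ > cf α`, pick in each of `ρ` open sets a point of the dense set of size `cf α < ρ`; since
`ρ` is regular, one point is picked `ρ` times. If `ρ = cf α`, take a cofinal set of order type
`cf α`: every subset of it of size `cf α` is still cofinal, so the complements of the closed
initial segments it cuts out are `cf α` nonempty open sets, no `cf α` of which share a point.
-/

universe u v

open Cardinal

open Set Order
open scoped Ordinal

theorem isCofinal_of_mk_eq {W : Type*} [LinearOrder W] [WellFoundedLT W]
    (hW : (#W).ord = typeLT W) {t : Set W} (ht : #t = #W) : IsCofinal t := by
  by_contra h
  obtain ⟨a, ha⟩ := not_isCofinal_iff.1 h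
  exact ((mk_le_mk_of_subset ha).trans_lt (mk_Iio_lt a hW)).ne ht

theorem exists_mk_eq_cof_forall_isCofinal (L : Type*) [LinearOrder L] [WellFoundedLT L] :
    ∃ s : Set L, #s = cof L ∧ ∀ t : Set s, #t = cof L → IsCofinal (Subtype.val '' t) := by
  obtain ⟨s, hs, htype⟩ := Ordinal.exists_ord_cof_eq L
  have hcard : #s = cof L := by rw [← Ordinal.card_type (· < ·), htype, card_ord]
  refine ⟨s, hcard, fun t ht => hs.trans (isCofinal_of_mk_eq ?_ (ht.trans hcard.symm))⟩
  rw [hcard, htype]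

theorem not_isCaliber_cof {X L : Type*} [TopologicalSpace X] [LinearOrder L] [WellFoundedLT L]
    [NoMaxOrder L] {x : L → X} (hx : Function.Bijective x)
    (hclosed : ∀ l, IsClosed (x '' Iio l)) : ¬ IsCaliber X (cof L) := by
  intro hcal
  obtain ⟨s, hs, hcofinal⟩ := exists_mk_eq_cof_forall_isCofinal L
  obtain ⟨t, ht, y, hy⟩ := hcal (fun l : s => (x '' Iio l.1)ᶜ) hs fun l =>
    ⟨(hclosed l).isOpen_compl, x l, fun h => self_notMem_Iio (hx.1.mem_set_image.1 h)⟩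
  obtain ⟨m, rfl⟩ := hx.2 y
  obtain ⟨a, ha⟩ := exists_gt m
  obtain ⟨_, ⟨l, hl, rfl⟩, hal⟩ := hcofinal t ht a
  exact mem_iInter₂.1 hy l hl ⟨m, ha.trans_le hal, rfl⟩

theorem Dense.isCaliber_of_mk_lt {X : Type u} [TopologicalSpace X] {D : Set X} (hD : Dense D)
    {ρ : Cardinal.{u}} (hρ : ρ.IsRegular) (hDρ : #D < ρ) : IsCaliber X ρ := by
  intro ι U hι hU
  choose d hd using fun i => hD.exists_mem_open (hU i).1 (hU i).2
  obtain ⟨y, hy⟩ := infinite_pigeonhole (fun i => (⟨d i, (hd i).1⟩ : D)) (hι ▸ hρ.aleph0_le)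
    (by rwa [hι, hρ.cof_ord])
  refine ⟨_, hy.trans hι, y, mem_iInter₂.2 fun i hi => ?_⟩
  rw [mem_preimage, mem_singleton_iff] at hi
  exact hi ▸ (hd i).2

theorem Ordinal.not_isCaliber_cof {X : Type*} [TopologicalSpace X] {α : Ordinal.{u}}
    (hα : IsSuccLimit α) {x : Iio α → X} (hx : Function.Bijective x)
    (hclosed : ∀ ξ, IsClosed (x '' Iio ξ)) : ¬ IsCaliber X α.cof := by
  have : NoMaxOrder α.ToType :=
    isSuccPrelimit_type_lt_iff.1 (by rw [type_toType]; exact hα.isSuccPrelimit)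
  let e : Iio α ≃o α.ToType := ToType.mk
  have hclosed' : ∀ l, IsClosed ((x ∘ e.symm) '' Iio l) := fun l => by
    rw [image_comp, e.symm.image_Iio]
    exact hclosed _
  simpa using _root_.not_isCaliber_cof (hx.comp e.symm.bijective) hclosed'

theorem calibers_of_left_separated_space_general (X : Type u) [TopologicalSpace X]
    (α : Ordinal.{u}) (hα : Order.IsSuccLimit α)
    (x : {ξ : Ordinal // ξ < α} → X) (hbij : Function.Bijective x)
    (hclosed : ∀ β : Ordinal, IsClosed (x '' {ξ | ξ.1 < β}))
    (hdense : ∃ D : Set X, Dense D ∧ #D = α.cof)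
    (hsmall : ∀ ρ : Cardinal.{u}, ℵ₀ < ρ → ρ.IsRegular → ρ < α.cof → IsCaliber X ρ) :
    ∀ ρ : Cardinal.{u}, ℵ₀ < ρ → ρ.IsRegular → (IsCaliber X ρ ↔ ρ ≠ α.cof) := by
  intro ρ hρ hreg
  refine ⟨?_, fun hne => ?_⟩
  · rintro hcal rfl
    exact Ordinal.not_isCaliber_cof hα hbij (fun ξ => hclosed ξ.1) hcal
  · rcases hne.lt_or_gt with hlt | hgt
    · exact hsmall ρ hρ hreg hlt
    · obtain ⟨D, hD, hDcard⟩ := hdense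
      exact hD.isCaliber_of_mk_lt hreg (hDcard ▸ hgt)

/-- Packaging of Lemma 2.3: if `X` is a space on underlying set `α` (a limit ordinal of
uncountable cofinality), left-separated in the natural ordering, with a dense subset of
cardinality `cf(α)`, and every uncountable regular `ρ < cf(α)` is a caliber of `X`, then
the uncountable regular calibers of `X` are exactly the uncountable regular cardinals
other than `cf(α)`. -/
theorem calibers_of_left_separated_space (X : Type u) [TopologicalSpace X]
    (α : Ordinal.{u}) (hα : Order.IsSuccLimit α) (hcof : ℵ₀ < α.cof)
    (x : {ξ : Ordinal // ξ < α} → X) (hbij : Function.Bijective x)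
    (hclosed : ∀ β : Ordinal, IsClosed (x '' {ξ | ξ.1 < β}))
    (hdense : ∃ D : Set X, Dense D ∧ #D = α.cof)
    (hsmall : ∀ ρ : Cardinal.{u}, ℵ₀ < ρ → ρ.IsRegular → ρ < α.cof → IsCaliber X ρ) :
    ∀ ρ : Cardinal.{u}, ℵ₀ < ρ → ρ.IsRegular → (IsCaliber X ρ ↔ ρ ≠ α.cof) :=
  calibers_of_left_separated_space_general X α hα x hbij hclosed hdense hsmall
end
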